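/- arXiv:1806.04998 — 3 statements merged into one kernel-verified Lean document; each statement's English description precedes it below -/
import Mathlib

section
/- For $0 < H < 1/2$ and $T > 0$, if $f \in L^2([0,T])$, then the function $t \mapsto t^{2H-1}\left(\int_0^t (t-u)^{-1/2-H} u^{1/2-H} f(u)\,du\right)^2$ is integrable on $[0,T]$, and moreover $\int_0^T t^{2H-1}\left(\int_0^t (t-u)^{-1/2-H} u^{1/2-H} f(u)\,du\right)^2 dt \le C \int_0^T f(t)^2\,dt$ for a constant $C$ depending only on $H$ and $T$. -/
/-!
For `u ≤ t` the weight `t^(H-1/2) u^(1/2-H)` is at most `1`, so the operator is dominated by the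
Volterra operator with the kernel `(t-u)^(-1/2-H)`, whose integral over any interval of length
at most `T` is at most `K = T^(1/2-H)/(1/2-H)`. Cauchy–Schwarz against this kernel, followed by
Tonelli (Schur's test), bounds the weighted `L²` norm of the image by `K² ∫ f²`.
-/

open MeasureTheory Set
open scoped ENNReal

theorem lintegral_Ioc_rpow_sub_left {r : ℝ} (hr : -1 < r) {a b : ℝ} (hab : a ≤ b) :
    ∫⁻ x in Ioc a b, ENNReal.ofReal ((x - a) ^ r) =
      ENNReal.ofReal ((b - a) ^ (r + 1) / (r + 1)) := by
  have hint : IntervalIntegrable (fun x => (x - a) ^ r) volume a b := by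
    simpa using
      (intervalIntegral.intervalIntegrable_rpow' (a := 0) (b := b - a) hr).comp_sub_right a
  rw [← ofReal_integral_eq_lintegral_ofReal
      ((intervalIntegrable_iff_integrableOn_Ioc_of_le hab).mp hint)
      ((ae_restrict_iff' measurableSet_Ioc).mpr (ae_of_all _ fun x hx =>
        Real.rpow_nonneg (sub_nonneg.mpr hx.1.le) r)),
    ← intervalIntegral.integral_of_le hab, intervalIntegral.integral_comp_sub_right (· ^ r),
    sub_self, integral_rpow (Or.inl hr), Real.zero_rpow (by linarith), sub_zero]

theorem lintegral_Ioc_rpow_sub_right {r : ℝ} (hr : -1 < r) {a b : ℝ} (hab : a ≤ b) :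
    ∫⁻ x in Ioc a b, ENNReal.ofReal ((b - x) ^ r) =
      ENNReal.ofReal ((b - a) ^ (r + 1) / (r + 1)) := by
  have hint : IntervalIntegrable (fun x => (b - x) ^ r) volume a b := by
    simpa using
      ((intervalIntegral.intervalIntegrable_rpow' (a := 0) (b := b - a) hr).comp_sub_left b).symm
  rw [← ofReal_integral_eq_lintegral_ofReal
      ((intervalIntegrable_iff_integrableOn_Ioc_of_le hab).mp hint)
      ((ae_restrict_iff' measurableSet_Ioc).mpr (ae_of_all _ fun x hx =>
        Real.rpow_nonneg (sub_nonneg.mpr hx.2) r)),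
    ← intervalIntegral.integral_of_le hab, intervalIntegral.integral_comp_sub_left (· ^ r),
    sub_self, integral_rpow (Or.inl hr), Real.zero_rpow (by linarith), sub_zero]

theorem sq_lintegral_mul_le {α : Type*} [MeasurableSpace α] {μ : Measure α}
    {k h : α → ℝ≥0∞} (hk : AEMeasurable k μ) (hh : AEMeasurable h μ) :
    (∫⁻ x, k x * h x ∂μ) ^ 2 ≤ (∫⁻ x, k x ∂μ) * ∫⁻ x, k x * h x ^ 2 ∂μ := by
  have holder := ENNReal.lintegral_mul_norm_pow_le (g := fun x => k x * h x ^ 2) hk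
    (hk.mul (hh.pow_const 2)) (p := 1/2) (q := 1/2) (by norm_num) (by norm_num) (by norm_num)
  have hsqrt : ∀ x, k x ^ (1/2 : ℝ) * (k x * h x ^ 2) ^ (1/2 : ℝ) = k x * h x := fun x => by
    rw [ENNReal.mul_rpow_of_nonneg _ _ (by norm_num), ← mul_assoc,
      ← ENNReal.rpow_add_of_nonneg _ _ (by norm_num) (by norm_num), ← ENNReal.rpow_natCast,
      ← ENNReal.rpow_mul]
    norm_num
  simp only [hsqrt] at holder
  calc (∫⁻ x, k x * h x ∂μ) ^ 2
      ≤ ((∫⁻ x, k x ∂μ) ^ (1/2 : ℝ) * (∫⁻ x, k x * h x ^ 2 ∂μ) ^ (1/2 : ℝ)) ^ 2 :=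
        pow_le_pow_left' holder 2
    _ = (∫⁻ x, k x ∂μ) * ∫⁻ x, k x * h x ^ 2 ∂μ := by
      rw [mul_pow, ← ENNReal.rpow_natCast, ← ENNReal.rpow_mul, ← ENNReal.rpow_natCast,
        ← ENNReal.rpow_mul]
      norm_num

theorem lintegral_Ioc_lintegral_Ioc_rpow_sub_mul_le {r : ℝ} (hr : -1 < r) {a T : ℝ}
    {h : ℝ → ℝ≥0∞} (hh : AEMeasurable h (volume.restrict (Ioc a T))) :
    ∫⁻ t in Ioc a T, ∫⁻ u in Ioc a t, ENNReal.ofReal ((t - u) ^ r) * h u ≤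
      ENNReal.ofReal ((T - a) ^ (r + 1) / (r + 1)) * ∫⁻ u in Ioc a T, h u := by
  set g := hh.mk h
  have hg : Measurable g := hh.measurable_mk
  set J : ℝ → ℝ → ℝ≥0∞ := fun t u =>
    (Iic t).indicator (fun u => ENNReal.ofReal ((t - u) ^ r) * g u) u
  have hJ : Measurable (Function.uncurry J) :=
    (((measurable_fst.sub measurable_snd).pow_const r).ennreal_ofReal.mul
      (hg.comp measurable_snd)).indicator (measurableSet_le measurable_snd measurable_fst)
  have hJ_inner : ∀ u ∈ Ioc a T,
      ∫⁻ t in Ioc a T, J t u ≤ ENNReal.ofReal ((T - a) ^ (r + 1) / (r + 1)) * g u := by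
    intro u hu
    have hJu : ∀ t,
        J t u = (Ici u).indicator (fun t => ENNReal.ofReal ((t - u) ^ r)) t * g u := by
      intro t
      by_cases hut : u ≤ t <;> simp [J, indicator, hut]
    calc ∫⁻ t in Ioc a T, J t u
        = (∫⁻ t in Ici u ∩ Ioc a T, ENNReal.ofReal ((t - u) ^ r)) * g u := by
          simp only [hJu]
          have hk : Measurable fun t : ℝ => ENNReal.ofReal ((t - u) ^ r) := by fun_prop
          rw [lintegral_mul_const _ (hk.indicator measurableSet_Ici),
            lintegral_indicator measurableSet_Ici, Measure.restrict_restrict measurableSet_Ici]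
      _ ≤ (∫⁻ t in Ioc u T, ENNReal.ofReal ((t - u) ^ r)) * g u := by
          gcongr 1
          refine lintegral_mono_set' ((LE.le.eventuallyLE ?_).trans Ioc_ae_eq_Icc.symm.le)
          exact fun t ht => ⟨ht.1, ht.2.2⟩
      _ ≤ ENNReal.ofReal ((T - a) ^ (r + 1) / (r + 1)) * g u := by
          rw [lintegral_Ioc_rpow_sub_left hr hu.2]
          gcongr <;> linarith [hu.1, hu.2]
  calc ∫⁻ t in Ioc a T, ∫⁻ u in Ioc a t, ENNReal.ofReal ((t - u) ^ r) * h u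
      = ∫⁻ t in Ioc a T, ∫⁻ u in Ioc a T, J t u := by
        refine setLIntegral_congr_fun measurableSet_Ioc fun t ht => ?_
        rw [lintegral_indicator measurableSet_Iic, Measure.restrict_restrict measurableSet_Iic,
          inter_comm, Ioc_inter_Iic, min_eq_right ht.2]
        refine lintegral_congr_ae (ae_restrict_of_ae_restrict_of_subset
          (Ioc_subset_Ioc_right ht.2) ?_)
        filter_upwards [hh.ae_eq_mk] with u hu
        rw [hu]
    _ = ∫⁻ u in Ioc a T, ∫⁻ t in Ioc a T, J t u := lintegral_lintegral_swap hJ.aemeasurable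
    _ ≤ ∫⁻ u in Ioc a T, ENNReal.ofReal ((T - a) ^ (r + 1) / (r + 1)) * g u :=
        setLIntegral_mono' measurableSet_Ioc hJ_inner
    _ = ENNReal.ofReal ((T - a) ^ (r + 1) / (r + 1)) * ∫⁻ u in Ioc a T, h u := by
        rw [lintegral_const_mul _ hg, lintegral_congr_ae hh.ae_eq_mk.symm]

theorem rpow_neg_mul_enorm_integral_le {t β : ℝ} (ht : 0 < t) (hβ : 0 ≤ β) {k : ℝ → ℝ}
    (hk : ∀ u ∈ Ioc 0 t, 0 ≤ k u) (f : ℝ → ℝ) :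
    ENNReal.ofReal (t ^ (-β)) * ‖∫ u in Ioc 0 t, k u * u ^ β * f u‖ₑ ≤
      ∫⁻ u in Ioc 0 t, ENNReal.ofReal (k u) * ‖f u‖ₑ := by
  calc ENNReal.ofReal (t ^ (-β)) * ‖∫ u in Ioc 0 t, k u * u ^ β * f u‖ₑ
      ≤ ENNReal.ofReal (t ^ (-β)) * ∫⁻ u in Ioc 0 t, ‖k u * u ^ β * f u‖ₑ := by
        gcongr
        exact enorm_integral_le_lintegral_enorm _
    _ = ∫⁻ u in Ioc 0 t, ENNReal.ofReal (t ^ (-β)) * ‖k u * u ^ β * f u‖ₑ :=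
        (lintegral_const_mul' _ _ ENNReal.ofReal_ne_top).symm
    _ ≤ ∫⁻ u in Ioc 0 t, ENNReal.ofReal (k u) * ‖f u‖ₑ := by
        refine setLIntegral_mono' measurableSet_Ioc fun u hu => ?_
        have hweight : t ^ (-β) * (k u * u ^ β) ≤ k u := by
          rw [Real.rpow_neg ht.le, ← mul_assoc, mul_comm, ← mul_assoc, ← div_eq_mul_inv]
          refine mul_le_of_le_one_left (hk u hu) ((div_le_one (by positivity)).mpr ?_)
          exact Real.rpow_le_rpow hu.1.le hu.2 hβ
        rw [enorm_mul, ← mul_assoc, Real.enorm_of_nonneg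
          (mul_nonneg (hk u hu) (Real.rpow_nonneg hu.1.le β)),
          ← ENNReal.ofReal_mul (by positivity)]
        gcongr

theorem ofReal_rpow_mul_sq_integral_le {H t : ℝ} (hH : H < 1/2) (ht : 0 < t) {f : ℝ → ℝ}
    (hf : AEMeasurable (fun u => ‖f u‖ₑ) (volume.restrict (Ioc 0 t))) :
    ENNReal.ofReal
        (t ^ (2*H - 1) *
          (∫ u in Ioc (0:ℝ) t, (t - u) ^ (-(1/2) - H) * u ^ (1/2 - H) * f u) ^ 2) ≤
      (∫⁻ u in Ioc 0 t, ENNReal.ofReal ((t - u) ^ (-(1/2) - H))) *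
        ∫⁻ u in Ioc 0 t, ENNReal.ofReal ((t - u) ^ (-(1/2) - H)) * ‖f u‖ₑ ^ 2 := by
  set g := ∫ u in Ioc (0:ℝ) t, (t - u) ^ (-(1/2) - H) * u ^ (1/2 - H) * f u
  have hsq : ENNReal.ofReal (t ^ (2*H - 1) * g ^ 2) =
      (ENNReal.ofReal (t ^ (-(1/2 - H))) * ‖g‖ₑ) ^ 2 := by
    have hreal : t ^ (2*H - 1) * g ^ 2 = (t ^ (-(1/2 - H)) * |g|) ^ 2 := by
      rw [mul_pow, sq_abs, ← Real.rpow_mul_natCast ht.le]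
      ring_nf
    rw [hreal, ENNReal.ofReal_pow (by positivity), ENNReal.ofReal_mul (by positivity),
      Real.enorm_eq_ofReal_abs]
  have hk : Measurable fun u => ENNReal.ofReal ((t - u) ^ (-(1/2) - H)) := by fun_prop
  calc ENNReal.ofReal (t ^ (2*H - 1) * g ^ 2)
      = (ENNReal.ofReal (t ^ (-(1/2 - H))) * ‖g‖ₑ) ^ 2 := hsq
    _ ≤ (∫⁻ u in Ioc 0 t, ENNReal.ofReal ((t - u) ^ (-(1/2) - H)) * ‖f u‖ₑ) ^ 2 := by
        gcongr
        exact rpow_neg_mul_enorm_integral_le ht (by linarith)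
          (fun u hu => Real.rpow_nonneg (sub_nonneg.mpr hu.2) _) f
    _ ≤ _ := sq_lintegral_mul_le hk.aemeasurable hf

theorem lintegral_ofReal_rpow_mul_sq_integral_le {H T : ℝ} (hH : H < 1/2) {f : ℝ → ℝ}
    (hf : AEMeasurable (fun u => ‖f u‖ₑ) (volume.restrict (Ioc 0 T))) :
    ∫⁻ t in Ioc 0 T, ENNReal.ofReal (t ^ (2*H - 1) *
        (∫ u in Ioc (0:ℝ) t, (t - u) ^ (-(1/2) - H) * u ^ (1/2 - H) * f u) ^ 2) ≤
      ENNReal.ofReal (T ^ (1/2 - H) / (1/2 - H)) * ENNReal.ofReal (T ^ (1/2 - H) / (1/2 - H)) *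
        ∫⁻ u in Ioc 0 T, ‖f u‖ₑ ^ 2 := by
  have hr : -1 < -(1/2) - H := by linarith
  have hr1 : -(1/2) - H + 1 = 1/2 - H := by ring
  set K := ENNReal.ofReal (T ^ (1/2 - H) / (1/2 - H)) with hK
  have hkernel : ∀ t ∈ Ioc 0 T,
      ∫⁻ u in Ioc 0 t, ENNReal.ofReal ((t - u) ^ (-(1/2) - H)) ≤ K := by
    intro t ht
    rw [lintegral_Ioc_rpow_sub_right hr ht.1.le, sub_zero, hr1, hK]
    gcongr <;> linarith [ht.1, ht.2]
  calc _ ≤ ∫⁻ t in Ioc 0 T, K *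
          ∫⁻ u in Ioc 0 t, ENNReal.ofReal ((t - u) ^ (-(1/2) - H)) * ‖f u‖ₑ ^ 2 :=
        setLIntegral_mono' measurableSet_Ioc fun t ht =>
          (ofReal_rpow_mul_sq_integral_le hH ht.1
            (hf.mono_set (Ioc_subset_Ioc_right ht.2))).trans (by gcongr; exact hkernel t ht)
    _ = K * ∫⁻ t in Ioc 0 T,
          ∫⁻ u in Ioc 0 t, ENNReal.ofReal ((t - u) ^ (-(1/2) - H)) * ‖f u‖ₑ ^ 2 :=
        lintegral_const_mul' _ _ ENNReal.ofReal_ne_top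
    _ ≤ K * (K * ∫⁻ u in Ioc 0 T, ‖f u‖ₑ ^ 2) := by
        gcongr
        have := lintegral_Ioc_lintegral_Ioc_rpow_sub_mul_le hr (hf.pow_const 2)
        rwa [sub_zero, hr1] at this
    _ = K * K * ∫⁻ u in Ioc 0 T, ‖f u‖ₑ ^ 2 := (mul_assoc _ _ _).symm

theorem exists_aestronglyMeasurable_Ioo_not_Ioc {E : Type*} [TopologicalSpace E]
    [TopologicalSpace.PseudoMetrizableSpace E] (f : ℝ → E) (a T : ℝ) :
    ∃ τ, AEStronglyMeasurable f (volume.restrict (Ioo a τ)) ∧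
      ∀ t ≤ T, τ < t → ¬ AEStronglyMeasurable f (volume.restrict (Ioc a t)) := by
  set S := {t | t ≤ T ∧ AEStronglyMeasurable f (volume.restrict (Ioc a t))}
  have hS : S.Nonempty := ⟨min a T, min_le_right a T, by
    rw [Ioc_eq_empty (not_lt.mpr (min_le_left a T)), Measure.restrict_empty]
    exact aestronglyMeasurable_zero_measure f⟩
  have hSb : BddAbove S := ⟨T, fun t ht => ht.1⟩
  refine ⟨sSup S, ?_, fun t htT hτt hft => (le_csSup hSb ⟨htT, hft⟩).not_gt hτt⟩
  obtain ⟨u, -, hu_tend, huS⟩ := exists_seq_tendsto_sSup hS hSb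
  have hsub : Ioo a (sSup S) ⊆ ⋃ n, Ioc a (u n) := fun x hx => by
    obtain ⟨n, hn⟩ := (hu_tend.eventually (eventually_gt_nhds hx.2)).exists
    exact mem_iUnion.mpr ⟨n, hx.1, hn.le⟩
  exact (aestronglyMeasurable_iUnion_iff.mpr fun n => (huS n).2).mono_set hsub

theorem MeasureTheory.AEStronglyMeasurable.of_mul_left {α : Type*} [MeasurableSpace α]
    {μ : Measure α} {g f : α → ℝ} (hgf : AEStronglyMeasurable (fun x => g x * f x) μ)
    (hg : Measurable g)
    (hg0 : ∀ᵐ x ∂μ, g x ≠ 0) : AEStronglyMeasurable f μ :=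
  (hg.inv.aestronglyMeasurable.mul hgf).congr
    (hg0.mono fun x hx => inv_mul_cancel_left₀ hx (f x))

theorem stronglyMeasurable_integral_Ioc {E : Type*} [NormedAddCommGroup E] [NormedSpace ℝ E]
    {F : ℝ → ℝ → E} (hF : StronglyMeasurable (Function.uncurry F)) (a : ℝ) :
    StronglyMeasurable fun t => ∫ u in Ioc a t, F t u := by
  have hset : MeasurableSet {p : ℝ × ℝ | p.2 ∈ Ioc a p.1} :=
    (measurableSet_lt measurable_const measurable_snd).inter
      (measurableSet_le measurable_snd measurable_fst)
  convert (hF.indicator hset).integral_prod_right' (ν := volume) using 2 with t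
  rw [← integral_indicator measurableSet_Ioc]
  rfl

/-- `f` need not be measurable: beyond the supremum `τ` of the `t` with `f` a.e.-strongly
measurable on `(a, t]`, the integrand is not integrable and the integral is the junk value `0`. -/
theorem aestronglyMeasurable_integral_Ioc_mul {a : ℝ} {F : ℝ → ℝ → ℝ}
    (hF : Measurable (Function.uncurry F)) (hF0 : ∀ t u, a < u → u < t → F t u ≠ 0)
    (f : ℝ → ℝ) (T : ℝ) :
    AEStronglyMeasurable (fun t => ∫ u in Ioc a t, F t u * f u) (volume.restrict (Iic T)) := by
  obtain ⟨τ, hfτ, hf_not⟩ := exists_aestronglyMeasurable_Ioo_not_Ioc f a T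
  have hG : StronglyMeasurable fun t => ∫ u in Ioc a t, F t u * hfτ.mk f u :=
    stronglyMeasurable_integral_Ioc (F := fun t u => F t u * hfτ.mk f u)
      (hF.mul (hfτ.stronglyMeasurable_mk.measurable.comp measurable_snd)).stronglyMeasurable a
  have hne : ∀ (s : Set ℝ) (x : ℝ), ∀ᵐ t ∂volume.restrict s, t ≠ x := fun s x =>
    ae_restrict_of_ae (measure_eq_zero_iff_ae_notMem.mp (measure_singleton x))
  refine ((hG.indicator (measurableSet_Iio (a := τ))).aestronglyMeasurable).congr ?_
  filter_upwards [ae_restrict_mem measurableSet_Iic, hne _ τ] with t htT htτ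
  rcases htτ.lt_or_gt with hlt | hgt
  · rw [indicator_of_mem (mem_Iio.mpr hlt)]
    refine integral_congr_ae
      (ae_restrict_of_ae_restrict_of_subset (Ioc_subset_Ioo_right hlt) ?_)
    filter_upwards [hfτ.ae_eq_mk] with u hu
    rw [hu]
  · have hFt : Measurable (F t) := hF.comp measurable_prodMk_left
    rw [indicator_of_notMem (notMem_Iio.mpr hgt.le), integral_undef fun hint =>
      hf_not t htT hgt (hint.aestronglyMeasurable.of_mul_left hFt ?_)]
    filter_upwards [ae_restrict_mem measurableSet_Ioc, hne _ t] with u hu hut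
    exact hF0 t u hu.1 (hu.2.lt_of_ne hut)

theorem aestronglyMeasurable_rpow_mul_sq_integral (H T : ℝ) (f : ℝ → ℝ) :
    AEStronglyMeasurable (fun t => t ^ (2*H - 1) *
        (∫ u in Ioc (0:ℝ) t, (t - u) ^ (-(1/2) - H) * u ^ (1/2 - H) * f u) ^ 2)
      (volume.restrict (Ioc 0 T)) := by
  have hint := aestronglyMeasurable_integral_Ioc_mul (a := 0)
    (F := fun t u => (t - u) ^ (-(1/2) - H) * u ^ (1/2 - H)) (by fun_prop)
    (fun t u hu hut => by have := sub_pos.mpr hut; positivity) f T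
  exact ((measurable_id.pow_const _).aestronglyMeasurable.mul (hint.pow 2)).mono_set
    Ioc_subset_Iic_self

theorem aemeasurable_enorm_of_aestronglyMeasurable_sq {α : Type*} [MeasurableSpace α]
    {μ : Measure α} {f : α → ℝ} (hf : AEStronglyMeasurable (fun x => f x ^ 2) μ) :
    AEMeasurable (fun x => ‖f x‖ₑ) μ := by
  refine (hf.enorm.pow_const (1/2 : ℝ)).congr (ae_of_all _ fun x => ?_)
  show ‖f x ^ 2‖ₑ ^ (1/2 : ℝ) = ‖f x‖ₑ
  rw [enorm_pow, ← ENNReal.rpow_natCast, ← ENNReal.rpow_mul]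
  norm_num

theorem integrable_and_integral_le_of_lintegral_ofReal_le {α : Type*} [MeasurableSpace α]
    {μ : Measure α} {φ : α → ℝ} {c : ℝ} (hφm : AEStronglyMeasurable φ μ) (hφ0 : 0 ≤ᵐ[μ] φ)
    (hc : 0 ≤ c) (h : ∫⁻ x, ENNReal.ofReal (φ x) ∂μ ≤ ENNReal.ofReal c) :
    Integrable φ μ ∧ ∫ x, φ x ∂μ ≤ c :=
  ⟨⟨hφm, (hasFiniteIntegral_iff_ofReal hφ0).mpr (h.trans_lt ENNReal.ofReal_lt_top)⟩, by
    rw [integral_eq_lintegral_of_nonneg_ae hφ0 hφm]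
    exact ENNReal.toReal_le_of_le_ofReal hc h⟩

theorem stmt_0_general (H T : ℝ) (hH : H < 1/2) (hT : 0 < T) :
    ∃ C : ℝ, ∀ f : ℝ → ℝ,
      IntegrableOn (fun t => (f t) ^ 2) (Ioc 0 T) volume →
      IntegrableOn
        (fun t => t ^ (2*H - 1) *
          (∫ u in Ioc (0:ℝ) t, (t - u) ^ (-(1/2) - H) * u ^ (1/2 - H) * f u) ^ 2)
        (Ioc 0 T) volume ∧
      (∫ t in Ioc (0:ℝ) T, t ^ (2*H - 1) *
          (∫ u in Ioc (0:ℝ) t, (t - u) ^ (-(1/2) - H) * u ^ (1/2 - H) * f u) ^ 2)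
        ≤ C * ∫ t in Ioc (0:ℝ) T, (f t) ^ 2 := by
  set K := T ^ (1/2 - H) / (1/2 - H)
  have hK : 0 ≤ K := div_nonneg (Real.rpow_nonneg hT.le _) (by linarith)
  refine ⟨K * K, fun f hf2 => integrable_and_integral_le_of_lintegral_ofReal_le
    (aestronglyMeasurable_rpow_mul_sq_integral H T f) ?_
    (mul_nonneg (mul_nonneg hK hK) (integral_nonneg fun _ => sq_nonneg _)) ?_⟩
  · filter_upwards [ae_restrict_mem measurableSet_Ioc] with t ht
    have := ht.1
    positivity
  · have hf2_lintegral :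
        ∫⁻ u in Ioc 0 T, ‖f u‖ₑ ^ 2 = ENNReal.ofReal (∫ u in Ioc 0 T, f u ^ 2) := by
      rw [ofReal_integral_eq_lintegral_ofReal hf2 (ae_of_all _ fun _ => sq_nonneg _)]
      refine lintegral_congr fun u => ?_
      rw [Real.enorm_eq_ofReal_abs, ← ENNReal.ofReal_pow (abs_nonneg _), sq_abs]
    rw [ENNReal.ofReal_mul (mul_nonneg hK hK), ENNReal.ofReal_mul hK, ← hf2_lintegral]
    exact lintegral_ofReal_rpow_mul_sq_integral_le hH
      (aemeasurable_enorm_of_aestronglyMeasurable_sq hf2.aestronglyMeasurable)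

/-- The weighted left-sided fractional operator
`f ↦ t^(H-1/2) · ∫_0^t (t-u)^(-1/2-H) u^(1/2-H) f(u) du` is bounded on `L²([0,T])`:
the squared image (with weight `t^(2H-1)`) is integrable and its integral is bounded
by a constant (depending only on `H` and `T`) times `∫_0^T f(t)² dt`. -/
theorem stmt_0 (H T : ℝ) (hH0 : 0 < H) (hH : H < 1/2) (hT : 0 < T) :
    ∃ C : ℝ, ∀ f : ℝ → ℝ,
      IntegrableOn (fun t => (f t) ^ 2) (Ioc 0 T) volume →
      IntegrableOn
        (fun t => t ^ (2*H - 1) *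
          (∫ u in Ioc (0:ℝ) t, (t - u) ^ (-(1/2) - H) * u ^ (1/2 - H) * f u) ^ 2)
        (Ioc 0 T) volume ∧
      (∫ t in Ioc (0:ℝ) T, t ^ (2*H - 1) *
          (∫ u in Ioc (0:ℝ) t, (t - u) ^ (-(1/2) - H) * u ^ (1/2 - H) * f u) ^ 2)
        ≤ C * ∫ t in Ioc (0:ℝ) T, (f t) ^ 2 :=
  stmt_0_general H T hH hT
end

section
/- Let $0 < H < 1/2$, $T > 0$, and define for $0 \le z < t \le T$: $\kappa(z,t) = (tz)^{1/2-H}\int_t^T (u-t)^{-1/2-H} u^{2H-1} (u-z)^{-1/2-H}\,du$. Then $\kappa(z,t) \le C\, t^{H-1/2} z^{1/2-H} (t-z)^{-2H}$ where $C = \int_0^\infty x^{-1/2-H}(x+1)^{-1/2-H}\,dx < \infty$. -/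
/-!
Since `2H - 1 < 0`, the factor `u ^ (2H - 1)` is at most `t ^ (2H - 1)` for `u > t`, and the
remaining nonnegative integrand may be integrated over all of `(t, ∞)`. The substitution
`u = t + (t - z) x` turns that integral into `(t - z) ^ (-2H) · C`, and
`(tz) ^ (1/2 - H) · t ^ (2H - 1) = t ^ (H - 1/2) z ^ (1/2 - H)`.
-/

open MeasureTheory Set

theorem indicator_Ioi_comp_mul_add {M : Type*} [Zero M] (g : ℝ → M) (c t : ℝ) {s : ℝ}
    (hs : 0 < s) :
    (Ioi c).indicator (fun x => g (s * x + t)) =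
      fun x => (Ioi (s * c + t)).indicator g (s * x + t) := by
  ext x
  simp only [indicator_apply, mem_Ioi, add_lt_add_iff_right, mul_lt_mul_iff_right₀ hs]

section AffineSubstitution

variable {E : Type*} [NormedAddCommGroup E]

theorem integrableOn_Ioi_comp_mul_add_iff (g : ℝ → E) (c t : ℝ) {s : ℝ} (hs : 0 < s) :
    IntegrableOn (fun x => g (s * x + t)) (Ioi c) ↔ IntegrableOn g (Ioi (s * c + t)) := by
  rw [← integrable_indicator_iff measurableSet_Ioi, ← integrable_indicator_iff measurableSet_Ioi,
    indicator_Ioi_comp_mul_add g c t hs,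
    integrable_comp_mul_left_iff (fun y => (Ioi (s * c + t)).indicator g (y + t)) hs.ne']
  exact ⟨fun h => by simpa using h.comp_add_right (-t), fun h => h.comp_add_right t⟩

variable [NormedSpace ℝ E]

theorem integral_comp_mul_add_Ioi (g : ℝ → E) (c t : ℝ) {s : ℝ} (hs : 0 < s) :
    ∫ x in Ioi c, g (s * x + t) = s⁻¹ • ∫ u in Ioi (s * c + t), g u := by
  rw [← integral_indicator measurableSet_Ioi, ← integral_indicator measurableSet_Ioi,
    indicator_Ioi_comp_mul_add g c t hs,
    Measure.integral_comp_mul_left (fun y => (Ioi (s * c + t)).indicator g (y + t)),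
    integral_add_right_eq_self, abs_of_pos (inv_pos.mpr hs)]

end AffineSubstitution

open Real

theorem integrableOn_Ioi_rpow_mul_add_one_rpow {a b : ℝ} (ha : -1 < a) (hb : b ≤ 0)
    (hab : a + b < -1) : IntegrableOn (fun x : ℝ => x ^ a * (x + 1) ^ b) (Ioi 0) := by
  have hmeas : AEStronglyMeasurable (fun x : ℝ => x ^ a * (x + 1) ^ b) :=
    ((measurable_id.pow_const a).mul ((measurable_id.add_const 1).pow_const b)).aestronglyMeasurable
  have hnear : IntegrableOn (fun x : ℝ => x ^ a * (x + 1) ^ b) (Ioc 0 1) := by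
    have hdom : IntegrableOn (fun x : ℝ => x ^ a) (Ioc 0 1) :=
      (intervalIntegrable_iff_integrableOn_Ioc_of_le zero_le_one).mp
        (intervalIntegral.intervalIntegrable_rpow' ha)
    refine hdom.mono' hmeas.restrict ?_
    filter_upwards [ae_restrict_mem measurableSet_Ioc] with x hx
    rw [norm_of_nonneg (by have := hx.1; positivity)]
    exact mul_le_of_le_one_right (rpow_nonneg hx.1.le a)
      (rpow_le_one_of_one_le_of_nonpos (by linarith [hx.1]) hb)
  have hfar : IntegrableOn (fun x : ℝ => x ^ a * (x + 1) ^ b) (Ioi 1) := by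
    refine (integrableOn_Ioi_rpow_of_lt hab one_pos).mono' hmeas.restrict ?_
    filter_upwards [ae_restrict_mem measurableSet_Ioi] with x (hx : 1 < x)
    rw [norm_of_nonneg (by positivity), rpow_add (by linarith)]
    gcongr ?_ * ?_
    exact rpow_le_rpow_of_nonpos (by linarith) (by linarith) hb
  rw [← Ioc_union_Ioi_eq_Ioi zero_le_one]
  exact hnear.union hfar

theorem sub_rpow_mul_sub_rpow_comp_mul_add {a b z t x : ℝ} (hzt : z < t) (hx : 0 < x) :
    ((t - z) * x + t - t) ^ a * ((t - z) * x + t - z) ^ b =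
      (t - z) ^ (a + b) * (x ^ a * (x + 1) ^ b) := by
  have hs : 0 < t - z := sub_pos.mpr hzt
  rw [add_sub_cancel_right, show (t - z) * x + t - z = (t - z) * (x + 1) by ring,
    mul_rpow hs.le hx.le, mul_rpow hs.le (by linarith), rpow_add hs]
  ring

theorem integral_Ioi_sub_rpow_mul_sub_rpow (a b : ℝ) {z t : ℝ} (hzt : z < t) :
    ∫ u in Ioi t, (u - t) ^ a * (u - z) ^ b =
      (t - z) ^ (a + b + 1) * ∫ x in Ioi (0 : ℝ), x ^ a * (x + 1) ^ b := by
  have hs : 0 < t - z := sub_pos.mpr hzt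
  have h := integral_comp_mul_add_Ioi (fun u => (u - t) ^ a * (u - z) ^ b) 0 t hs
  rw [mul_zero, zero_add, setIntegral_congr_fun measurableSet_Ioi
    (fun x hx => sub_rpow_mul_sub_rpow_comp_mul_add hzt hx), integral_const_mul,
    smul_eq_mul, eq_inv_mul_iff_mul_eq₀ hs.ne'] at h
  rw [← h, rpow_add_one hs.ne']
  ring

theorem integrableOn_Ioi_sub_rpow_mul_sub_rpow {a b z t : ℝ} (hzt : z < t)
    (h : IntegrableOn (fun x : ℝ => x ^ a * (x + 1) ^ b) (Ioi 0)) :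
    IntegrableOn (fun u => (u - t) ^ a * (u - z) ^ b) (Ioi t) := by
  have hs : 0 < t - z := sub_pos.mpr hzt
  have h' := (integrableOn_Ioi_comp_mul_add_iff (fun u => (u - t) ^ a * (u - z) ^ b) 0 t hs)
  rw [mul_zero, zero_add] at h'
  refine h'.mp (IntegrableOn.congr_fun (h.const_mul ((t - z) ^ (a + b))) (fun x hx => ?_)
    measurableSet_Ioi)
  exact (sub_rpow_mul_sub_rpow_comp_mul_add hzt hx).symm

theorem setIntegral_Ioc_mul_rpow_le {f : ℝ → ℝ} {c t T : ℝ} (ht : 0 < t) (hc : c ≤ 0)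
    (hf : IntegrableOn f (Ioi t)) (hf0 : ∀ u ∈ Ioi t, 0 ≤ f u) :
    ∫ u in Ioc t T, f u * u ^ c ≤ t ^ c * ∫ u in Ioi t, f u := by
  have hbound : ∀ u ∈ Ioc t T, f u * u ^ c ≤ t ^ c * f u := fun u hu => by
    rw [mul_comm]
    exact mul_le_mul_of_nonneg_right (rpow_le_rpow_of_nonpos ht hu.1.le hc) (hf0 u hu.1)
  have hdom : IntegrableOn (fun u => t ^ c * f u) (Ioc t T) :=
    (hf.mono_set Ioc_subset_Ioi_self).const_mul _
  have hint : IntegrableOn (fun u => f u * u ^ c) (Ioc t T) := by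
    refine hdom.mono' (((hf.mono_set Ioc_subset_Ioi_self).aestronglyMeasurable).mul
      (measurable_id.pow_const c).aestronglyMeasurable) ?_
    filter_upwards [ae_restrict_mem measurableSet_Ioc] with u hu
    rw [norm_of_nonneg (mul_nonneg (hf0 u hu.1) (rpow_nonneg (ht.trans hu.1).le c))]
    exact hbound u hu
  calc ∫ u in Ioc t T, f u * u ^ c
      ≤ ∫ u in Ioc t T, t ^ c * f u := setIntegral_mono_on hint hdom measurableSet_Ioc hbound
    _ ≤ ∫ u in Ioi t, t ^ c * f u := by
        refine setIntegral_mono_set (hf.const_mul _) ?_ Ioc_subset_Ioi_self.eventuallyLE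
        filter_upwards [ae_restrict_mem measurableSet_Ioi] with u hu
        exact mul_nonneg (rpow_nonneg ht.le c) (hf0 u hu)
    _ = t ^ c * ∫ u in Ioi t, f u := integral_const_mul _ _

theorem stmt_2_general (H T : ℝ) (hH0 : 0 < H) (hH : H < 1/2)
    (z t : ℝ) (hz : 0 ≤ z) (hzt : z < t) :
    IntegrableOn (fun x : ℝ => x ^ (-(1/2) - H) * (x + 1) ^ (-(1/2) - H)) (Ioi 0) volume ∧
    (t * z) ^ (1/2 - H) *
        (∫ u in Ioc t T, (u - t) ^ (-(1/2) - H) * u ^ (2*H - 1) * (u - z) ^ (-(1/2) - H))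
      ≤ (∫ x in Ioi (0:ℝ), x ^ (-(1/2) - H) * (x + 1) ^ (-(1/2) - H)) *
          (t ^ (H - 1/2) * z ^ (1/2 - H) * (t - z) ^ (-(2*H))) := by
  set a : ℝ := -(1/2) - H with ha
  set C := ∫ x in Ioi (0:ℝ), x ^ a * (x + 1) ^ a
  have ht : 0 < t := hz.trans_lt hzt
  have hC := integrableOn_Ioi_rpow_mul_add_one_rpow (a := a) (b := a) (by linarith [ha])
    (by linarith [ha]) (by linarith [ha])
  refine ⟨hC, ?_⟩
  have hkernel : ∫ u in Ioc t T, (u - t) ^ a * u ^ (2*H - 1) * (u - z) ^ a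
      ≤ t ^ (2*H - 1) * ((t - z) ^ (-(2*H)) * C) := by
    have h := setIntegral_Ioc_mul_rpow_le (T := T) ht (by linarith : 2*H - 1 ≤ 0)
      (integrableOn_Ioi_sub_rpow_mul_sub_rpow hzt hC)
      (fun u (hu : t < u) => by have := hzt.trans hu; positivity)
    rw [integral_Ioi_sub_rpow_mul_sub_rpow a a hzt, show a + a + 1 = -(2*H) by ring] at h
    simpa only [mul_right_comm] using h
  calc (t * z) ^ (1/2 - H) * ∫ u in Ioc t T, (u - t) ^ a * u ^ (2*H - 1) * (u - z) ^ a
      ≤ (t * z) ^ (1/2 - H) * (t ^ (2*H - 1) * ((t - z) ^ (-(2*H)) * C)) := by gcongr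
    _ = C * (t ^ (H - 1/2) * z ^ (1/2 - H) * (t - z) ^ (-(2*H))) := by
        rw [mul_rpow ht.le hz, show H - 1/2 = 1/2 - H + (2*H - 1) by ring, rpow_add ht]
        ring

/-- Pointwise bound on the kernel `κ(z,t)` for `0 ≤ z < t ≤ T`:
`κ(z,t) ≤ C · t^(H-1/2) z^(1/2-H) (t-z)^(-2H)`, where
`C = ∫_0^∞ x^(-1/2-H)(x+1)^(-1/2-H) dx < ∞`. -/
theorem stmt_2 (H T : ℝ) (hH0 : 0 < H) (hH : H < 1/2) (hT : 0 < T)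
    (z t : ℝ) (hz : 0 ≤ z) (hzt : z < t) (htT : t ≤ T) :
    IntegrableOn (fun x : ℝ => x ^ (-(1/2) - H) * (x + 1) ^ (-(1/2) - H)) (Ioi 0) volume ∧
    (t * z) ^ (1/2 - H) *
        (∫ u in Ioc t T, (u - t) ^ (-(1/2) - H) * u ^ (2*H - 1) * (u - z) ^ (-(1/2) - H))
      ≤ (∫ x in Ioi (0:ℝ), x ^ (-(1/2) - H) * (x + 1) ^ (-(1/2) - H)) *
          (t ^ (H - 1/2) * z ^ (1/2 - H) * (t - z) ^ (-(2*H))) :=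
  stmt_2_general H T hH0 hH z t hz hzt
end

section
/- Let $0 < H < 1/2$, $T > 0$, and let $\kappa(z,t)$ be the symmetric kernel defined by $\kappa(z,t) = (tz)^{1/2-H}\int_{\max(z,t)}^T (u-t)^{-1/2-H} u^{2H-1} (u-z)^{-1/2-H}\,du$ for $z \ne t$ in $[0,T]$. Then for every $r$ with $1 \le r < \frac{1}{2H}$, there exists a constant $C$ (depending on $H$, $T$, $r$) such that $\sup_{t \in [0,T]} \int_0^T \kappa(z,t)^r\,dz \le C$. -/
/-!
For `z < t` only `u > t` contributes to `κ(z, t)`, and there `u^(2H-1) ≤ t^(2H-1)` and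
`(u - z)^(-1/2-H) ≤ (u - t)^(β-1/2-H) (t - z)^(-β)` for any `β ≤ H + 1/2`. Integrating in `u`,
which converges when `β > 2H`, and using `(tz)^(1/2-H) t^(2H-1) ≤ 1` gives
`κ(z, t) ≤ T^(β-2H)/(β-2H) · |z - t|^(-β)`, and by symmetry of `κ` also for `z > t`.
With `β = H + 1/(2r)` the exponent `βr = Hr + 1/2` is below `1` exactly when `r < 1/(2H)`,
so `κ(·, t)^r` is dominated by the integrable singularity `|z - t|^(-βr)`, uniformly in `t`.
-/

open MeasureTheory Set

/-- The symmetric kernel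
`κ(z,t) = (tz)^(1/2-H) ∫_{max(z,t)}^T (u-t)^(-1/2-H) u^(2H-1) (u-z)^(-1/2-H) du`. -/
noncomputable def kappa (H T z t : ℝ) : ℝ :=
  (t * z) ^ (1/2 - H) *
    ∫ u in Ioc (max z t) T, (u - t) ^ (-(1/2) - H) * u ^ (2*H - 1) * (u - z) ^ (-(1/2) - H)

section RpowIntegrals

variable {a b s : ℝ}

theorem integrableOn_sub_rpow (hs : -1 < s) : IntegrableOn (fun u => (u - a) ^ s) (Ioc a b) := by
  have h := (intervalIntegral.intervalIntegrable_rpow' hs (a := 0) (b := b - a)).comp_sub_right a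
  rw [zero_add, sub_add_cancel] at h
  exact h.1

theorem integrableOn_rpow_sub (hs : -1 < s) : IntegrableOn (fun u => (b - u) ^ s) (Ioc a b) := by
  have h := (intervalIntegral.intervalIntegrable_rpow' hs (a := 0) (b := b - a)).comp_sub_left b
  rw [sub_zero, sub_sub_cancel] at h
  exact h.2

theorem integral_sub_rpow (hs : -1 < s) (hab : a ≤ b) :
    ∫ u in Ioc a b, (u - a) ^ s = (b - a) ^ (s + 1) / (s + 1) := by
  rw [← intervalIntegral.integral_of_le hab,
    intervalIntegral.integral_comp_sub_right (fun x => x ^ s), sub_self,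
    integral_rpow (Or.inl hs), Real.zero_rpow (by linarith), sub_zero]

theorem integral_rpow_sub (hs : -1 < s) (hab : a ≤ b) :
    ∫ u in Ioc a b, (b - u) ^ s = (b - a) ^ (s + 1) / (s + 1) := by
  rw [← intervalIntegral.integral_of_le hab,
    intervalIntegral.integral_comp_sub_left (fun x => x ^ s), sub_self,
    integral_rpow (Or.inl hs), Real.zero_rpow (by linarith), sub_zero]

variable {t : ℝ}

theorem integrableOn_abs_sub_rpow (hs : -1 < s) (hat : a ≤ t) (htb : t ≤ b) :
    IntegrableOn (fun z => |z - t| ^ s) (Ioc a b) := by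
  rw [← Ioc_union_Ioc_eq_Ioc hat htb]
  refine IntegrableOn.union ((integrableOn_rpow_sub hs).congr_fun (fun z hz => ?_) measurableSet_Ioc)
    ((integrableOn_sub_rpow hs).congr_fun (fun z hz => ?_) measurableSet_Ioc)
  · rw [abs_sub_comm, abs_of_nonneg (sub_nonneg.2 hz.2)]
  · rw [abs_of_nonneg (sub_nonneg.2 hz.1.le)]

theorem integral_abs_sub_rpow (hs : -1 < s) (hat : a ≤ t) (htb : t ≤ b) :
    ∫ z in Ioc a b, |z - t| ^ s = ((t - a) ^ (s + 1) + (b - t) ^ (s + 1)) / (s + 1) := by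
  rw [← Ioc_union_Ioc_eq_Ioc hat htb, setIntegral_union (Ioc_disjoint_Ioc_of_le le_rfl)
    measurableSet_Ioc (integrableOn_abs_sub_rpow hs hat le_rfl)
    (integrableOn_abs_sub_rpow hs le_rfl htb), add_div, ← integral_rpow_sub hs hat,
    ← integral_sub_rpow hs htb]
  congr 1
  · refine setIntegral_congr_fun measurableSet_Ioc fun z hz => ?_
    rw [abs_sub_comm, abs_of_nonneg (sub_nonneg.2 hz.2)]
  · refine setIntegral_congr_fun measurableSet_Ioc fun z hz => ?_
    rw [abs_of_nonneg (sub_nonneg.2 hz.1.le)]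

end RpowIntegrals

section KernelBound

variable {H T β z t : ℝ}

theorem kappa_symm (H T z t : ℝ) : kappa H T z t = kappa H T t z := by
  unfold kappa
  rw [mul_comm t z, max_comm]
  congr 1
  refine setIntegral_congr_fun measurableSet_Ioc fun u _ => ?_
  ring

theorem kappa_nonneg (hz : 0 ≤ z) (ht : 0 ≤ t) : 0 ≤ kappa H T z t := by
  refine mul_nonneg (by positivity) (setIntegral_nonneg measurableSet_Ioc fun u hu => ?_)
  have hzu : z < u := (le_max_left z t).trans_lt hu.1
  have htu : t < u := (le_max_right z t).trans_lt hu.1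
  have := sub_pos.2 hzu
  have := sub_pos.2 htu
  have : 0 < u := hz.trans_lt hzu
  positivity

theorem kappa_integrand_le {u : ℝ} (hH : H ≤ 1/2) (hβ0 : 0 ≤ β) (hβ : β ≤ H + 1/2)
    (hzt : z < t) (ht : 0 < t) (htu : t < u) :
    (u - t) ^ (-(1/2) - H) * u ^ (2*H - 1) * (u - z) ^ (-(1/2) - H)
      ≤ t ^ (2*H - 1) * (t - z) ^ (-β) * (u - t) ^ (β - 2*H - 1) := by
  have hut : 0 < u - t := sub_pos.2 htu
  have huz : 0 < u - z := by linarith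
  have htz : 0 < t - z := sub_pos.2 hzt
  have hsplit : (u - z) ^ (-(1/2) - H) = (u - z) ^ (β - 1/2 - H) * (u - z) ^ (-β) := by
    rw [← Real.rpow_add huz]; ring_nf
  have hu : u ^ (2*H - 1) ≤ t ^ (2*H - 1) :=
    Real.rpow_le_rpow_of_nonpos ht htu.le (by linarith)
  have hnear : (u - z) ^ (β - 1/2 - H) ≤ (u - t) ^ (β - 1/2 - H) :=
    Real.rpow_le_rpow_of_nonpos hut (by linarith) (by linarith)
  have hfar : (u - z) ^ (-β) ≤ (t - z) ^ (-β) :=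
    Real.rpow_le_rpow_of_nonpos htz (by linarith) (by linarith)
  calc (u - t) ^ (-(1/2) - H) * u ^ (2*H - 1) * (u - z) ^ (-(1/2) - H)
      = (u - t) ^ (-(1/2) - H) * u ^ (2*H - 1) * ((u - z) ^ (β - 1/2 - H) * (u - z) ^ (-β)) := by
        rw [hsplit]
    _ ≤ (u - t) ^ (-(1/2) - H) * t ^ (2*H - 1) * ((u - t) ^ (β - 1/2 - H) * (t - z) ^ (-β)) := by
        gcongr
    _ = t ^ (2*H - 1) * (t - z) ^ (-β) * ((u - t) ^ (-(1/2) - H) * (u - t) ^ (β - 1/2 - H)) := by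
        ring
    _ = t ^ (2*H - 1) * (t - z) ^ (-β) * (u - t) ^ (β - 2*H - 1) := by
        rw [← Real.rpow_add hut]; ring_nf

theorem kappa_le_of_lt (hH0 : 0 ≤ H) (hH : H ≤ 1/2) (hβ1 : 2*H < β) (hβ2 : β ≤ H + 1/2)
    (hz : 0 ≤ z) (hzt : z < t) (htT : t ≤ T) :
    kappa H T z t ≤ T ^ (β - 2*H) / (β - 2*H) * (t - z) ^ (-β) := by
  have ht : 0 < t := hz.trans_lt hzt
  have hδ : 0 < β - 2*H := by linarith
  have hinner : ∫ u in Ioc t T, (u - t) ^ (-(1/2) - H) * u ^ (2*H - 1) * (u - z) ^ (-(1/2) - H)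
      ≤ t ^ (2*H - 1) * (t - z) ^ (-β) * (T ^ (β - 2*H) / (β - 2*H)) :=
    calc _ ≤ ∫ u in Ioc t T, t ^ (2*H - 1) * (t - z) ^ (-β) * (u - t) ^ (β - 2*H - 1) := by
          refine integral_mono_of_nonneg ?_ ((integrableOn_sub_rpow (by linarith)).const_mul _) ?_
          · filter_upwards [ae_restrict_mem measurableSet_Ioc] with u hu
            have := sub_pos.2 hu.1
            have : 0 < u - z := by linarith
            have : 0 < u := by linarith
            positivity
          · filter_upwards [ae_restrict_mem measurableSet_Ioc] with u hu
            exact kappa_integrand_le hH (by linarith) hβ2 hzt ht hu.1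
      _ = t ^ (2*H - 1) * (t - z) ^ (-β) * ((T - t) ^ (β - 2*H) / (β - 2*H)) := by
          rw [integral_const_mul, integral_sub_rpow (by linarith) htT, sub_add_cancel]
      _ ≤ t ^ (2*H - 1) * (t - z) ^ (-β) * (T ^ (β - 2*H) / (β - 2*H)) := by
          gcongr
          linarith
  have hprefactor : (t * z) ^ (1/2 - H) * t ^ (2*H - 1) ≤ 1 :=
    calc (t * z) ^ (1/2 - H) * t ^ (2*H - 1) ≤ (t * t) ^ (1/2 - H) * t ^ (2*H - 1) := by
          gcongr
      _ = 1 := by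
          rw [Real.mul_rpow ht.le ht.le, ← Real.rpow_add ht, ← Real.rpow_add ht]
          ring_nf; exact Real.rpow_zero t
  unfold kappa
  rw [max_eq_right hzt.le]
  calc _ ≤ (t * z) ^ (1/2 - H) * (t ^ (2*H - 1) * (t - z) ^ (-β) * (T ^ (β - 2*H) / (β - 2*H))) := by
        gcongr
    _ = (t * z) ^ (1/2 - H) * t ^ (2*H - 1) * (T ^ (β - 2*H) / (β - 2*H) * (t - z) ^ (-β)) := by
        ring
    _ ≤ T ^ (β - 2*H) / (β - 2*H) * (t - z) ^ (-β) := by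
        have := sub_pos.2 hzt
        have : 0 ≤ T := by linarith
        exact mul_le_of_le_one_left (by positivity) hprefactor

theorem kappa_le_abs_sub_rpow (hH0 : 0 ≤ H) (hH : H ≤ 1/2) (hβ1 : 2*H < β) (hβ2 : β ≤ H + 1/2)
    (hz : z ∈ Icc 0 T) (ht : t ∈ Icc 0 T) (hzt : z ≠ t) :
    kappa H T z t ≤ T ^ (β - 2*H) / (β - 2*H) * |z - t| ^ (-β) := by
  rcases hzt.lt_or_gt with h | h
  · rw [abs_sub_comm, abs_of_pos (sub_pos.2 h)]
    exact kappa_le_of_lt hH0 hH hβ1 hβ2 hz.1 h ht.2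
  · rw [kappa_symm, abs_of_pos (sub_pos.2 h)]
    exact kappa_le_of_lt hH0 hH hβ1 hβ2 ht.1 h hz.2

theorem integral_kappa_rpow_le {r : ℝ} (hH0 : 0 ≤ H) (hH : H ≤ 1/2) (hβ1 : 2*H < β)
    (hβ2 : β ≤ H + 1/2) (hr : 0 ≤ r) (hβr : β * r < 1) (ht : t ∈ Icc 0 T) :
    ∫ z in Ioc 0 T, kappa H T z t ^ r
      ≤ (T ^ (β - 2*H) / (β - 2*H)) ^ r * (2 * T ^ (1 - β * r) / (1 - β * r)) := by
  set M := T ^ (β - 2*H) / (β - 2*H)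
  have hM : 0 ≤ M := div_nonneg (Real.rpow_nonneg (ht.1.trans ht.2) _) (by linarith)
  have hs : -1 < -(β * r) := by linarith
  have hpointwise : ∀ z ∈ Ioc 0 T, z ≠ t → kappa H T z t ^ r ≤ M ^ r * |z - t| ^ (-(β * r)) := by
    intro z hz hzt
    calc kappa H T z t ^ r ≤ (M * |z - t| ^ (-β)) ^ r := by
          gcongr
          · exact kappa_nonneg hz.1.le ht.1
          · exact kappa_le_abs_sub_rpow hH0 hH hβ1 hβ2 (Ioc_subset_Icc_self hz) ht hzt
      _ = M ^ r * |z - t| ^ (-(β * r)) := by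
          rw [Real.mul_rpow hM (by positivity), ← Real.rpow_mul (abs_nonneg _), neg_mul]
  calc ∫ z in Ioc 0 T, kappa H T z t ^ r ≤ ∫ z in Ioc 0 T, M ^ r * |z - t| ^ (-(β * r)) := by
        refine integral_mono_of_nonneg ?_
          ((integrableOn_abs_sub_rpow hs ht.1 ht.2).const_mul _) ?_
        · filter_upwards [ae_restrict_mem measurableSet_Ioc] with z hz
          exact Real.rpow_nonneg (kappa_nonneg hz.1.le ht.1) r
        · filter_upwards [ae_restrict_mem measurableSet_Ioc, Measure.ae_ne _ t] with z hz hzt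
          exact hpointwise z hz hzt
    _ = M ^ r * ((t ^ (1 - β * r) + (T - t) ^ (1 - β * r)) / (1 - β * r)) := by
        rw [integral_const_mul, integral_abs_sub_rpow hs ht.1 ht.2, neg_add_eq_sub, sub_zero]
    _ ≤ M ^ r * ((T ^ (1 - β * r) + T ^ (1 - β * r)) / (1 - β * r)) := by
        have := ht.1
        have := ht.2
        gcongr
        linarith
    _ = M ^ r * (2 * T ^ (1 - β * r) / (1 - β * r)) := by
        ring

end KernelBound

theorem stmt_3_general (H T : ℝ) (hH0 : 0 < H) (hH : H < 1/2) :
    ∀ r : ℝ, 1 ≤ r → r < 1 / (2*H) →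
      ∃ C : ℝ, ∀ t ∈ Icc (0:ℝ) T, (∫ z in Ioc (0:ℝ) T, (kappa H T z t) ^ r) ≤ C := by
  intro r hr1 hr2
  have hr : 0 < r := one_pos.trans_le hr1
  have hHr : r * (2 * H) < 1 := (lt_div_iff₀ (by positivity)).1 hr2
  set β := H + 1 / (2 * r)
  have hβr : β * r = H * r + 1/2 := by simp only [β]; field_simp
  have hβ1 : 2*H < β := by
    have : H < 1 / (2 * r) := (lt_div_iff₀ (by positivity)).2 (by linarith)
    linarith
  have hβ2 : β ≤ H + 1/2 := by
    have : 1 / (2 * r) ≤ 1 / 2 := by gcongr; linarith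
    linarith
  exact ⟨_, fun t ht =>
    integral_kappa_rpow_le hH0.le hH.le hβ1 hβ2 hr.le (by linarith) ht⟩

/-- For every `1 ≤ r < 1/(2H)` there is a constant `C` (depending on `H`, `T`, `r`)
such that `sup_{t∈[0,T]} ∫_0^T κ(z,t)^r dz ≤ C`. -/
theorem stmt_3 (H T : ℝ) (hH0 : 0 < H) (hH : H < 1/2) (hT : 0 < T) :
    ∀ r : ℝ, 1 ≤ r → r < 1 / (2*H) →
      ∃ C : ℝ, ∀ t ∈ Icc (0:ℝ) T, (∫ z in Ioc (0:ℝ) T, (kappa H T z t) ^ r) ≤ C :=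
  stmt_3_general H T hH0 hH
end
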